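/- Let g be a Leibniz algebra over a field K and (V,l,r) a representation of g. For k ≥ 0 let C^k(g,V) be the space of k-multilinear maps g^k → V, and define ∂ : C^k(g,V) → C^{k+1}(g,V) by ∂c(x₁,…,x_{k+1}) = Σ_{i=1}^{k}(−1)^{i+1} l_{x_i}(c(x₁,…,x̂_i,…,x_{k+1})) + (−1)^{k+1} r_{x_{k+1}}(c(x₁,…,x_k)) + Σ_{1≤i<j≤k+1}(−1)^{i} c(x₁,…,x̂_i,…,x_{j−1},[x_i,x_j],x_{j+1},…,x_{k+1}). Then ∂∘∂ = 0, i.e. ∂(∂c) = 0 for every k-cochain c. -/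

import Mathlib

/-- The Leibniz coboundary operator (0-indexed version of the formula
`∂c(x₁,…,x_{k+1}) = Σ_{i=1}^{k}(−1)^{i+1} l_{x_i} c(x₁,…,x̂_i,…,x_{k+1})
 + (−1)^{k+1} r_{x_{k+1}} c(x₁,…,x_k)
 + Σ_{1≤i<j≤k+1}(−1)^{i} c(x₁,…,x̂_i,…,x_{j−1},[x_i,x_j],x_{j+1},…,x_{k+1})`). -/
def leibnizCoboundary {K : Type*} [Field K] {g V : Type*} [AddCommGroup g] [Module K g]
    [AddCommGroup V] [Module K V]
    (b : g →ₗ[K] g →ₗ[K] g) (l r : g →ₗ[K] Module.End K V)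
    {k : ℕ} (c : (Fin k → g) → V) : (Fin (k + 1) → g) → V := fun x =>
  (∑ p : Fin k, ((-1 : ℤ) ^ (p : ℕ)) • l (x p.castSucc) (c (x ∘ p.castSucc.succAbove)))
    + ((-1 : ℤ) ^ (k + 1)) • r (x (Fin.last k)) (c (x ∘ Fin.castSucc))
    + ∑ p : Fin (k + 1), ∑ q : Fin (k + 1),
        if h : p < q then
          ((-1 : ℤ) ^ ((p : ℕ) + 1)) •
            c (Function.update (x ∘ p.succAbove)
                (q.pred (Fin.pos_iff_ne_zero.mp (lt_of_le_of_lt (Fin.zero_le p) h)))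
                (b (x p) (x q)))
        else 0

/-!
Write `L_a c (y) = l_a (c y) - Σ_j c (y₁, …, [a, y_j], …, y_k)` for the Lie derivative of a
cochain. Splitting off the first argument gives the Cartan formula
`∂c (a, y) = L_a c (y) - ∂(c (a, ·)) (y)`. In a Leibniz algebra `[x, a] + [a, x]` acts trivially
from the left and is killed by `l`, so `[L_x, L_a] = L_{[x,a]} = -L_{[a,x]}`; together with the
Cartan formula this shows, by induction on the degree, that `∂` commutes with every `L_a` (in
degree `0` this is the axiom for `r_{[x,y]}`). Hence
`∂∂c (a, y) = L_a ∂c (y) - ∂(L_a c - ∂(c (a, ·))) (y) = ∂∂(c (a, ·)) (y)`, which vanishes by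
induction on `k`; the base case `k = 0` is the axiom `r_y l_x = -r_y r_x`.
-/

theorem Fin.cons_comp_castSucc {α : Type*} {n : ℕ} (a : α) (y : Fin (n + 1) → α) :
    Fin.cons a y ∘ Fin.castSucc = Fin.cons a (y ∘ Fin.castSucc) := by
  funext j
  induction j using Fin.cases <;> simp

namespace LeibnizCochain

section CommRing

variable {R g V : Type*} [CommRing R] [AddCommGroup g] [Module R g] [AddCommGroup V]
  (b : g →ₗ[R] g →ₗ[R] g)

theorem bracket_add_bracket_swap_apply
    (leib : ∀ x y z : g, b x (b y z) = b (b x y) z + b y (b x z)) (x a z : g) :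
    b (b x a + b a x) z = 0 := by
  rw [map_add, LinearMap.add_apply, eq_sub_of_add_eq (leib x a z).symm, leib a x z]
  abel

/- `q` is the slot of the shortened tuple that receives `[x_p, x_{q+1}]`, so `p ≤ q` is the
condition `i < j` of the 1-indexed formula. -/
def bracketTerm {k : ℕ} (c : (Fin k → g) → V) (x : Fin (k + 1) → g) : V :=
  ∑ p : Fin (k + 1), ∑ q : Fin k,
    if p ≤ q.castSucc then
      ((-1 : ℤ) ^ ((p : ℕ) + 1)) • c (Function.update (x ∘ p.succAbove) q (b (x p) (x q.succ)))
    else 0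

theorem bracketTerm_cons {k : ℕ} (c : (Fin (k + 1) → g) → V) (a : g) (y : Fin (k + 1) → g) :
    bracketTerm b c (Fin.cons a y) =
      -∑ j, c (Function.update y j (b a (y j))) - bracketTerm b (fun t => c (Fin.cons a t)) y := by
  simp only [bracketTerm, Fin.sum_univ_succ (f := fun p : Fin (k + 2) => _), Fin.zero_le, if_true,
    Fin.succAbove_zero, Fin.cons_comp_succ, Fin.cons_zero, Fin.cons_succ, Fin.val_zero, zero_add,
    pow_one, neg_one_smul, Finset.sum_neg_distrib]
  rw [sub_eq_add_neg]
  congr 1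
  rw [← Finset.sum_neg_distrib]
  refine Finset.sum_congr rfl fun p _ => ?_
  rw [Fin.sum_univ_succ (f := fun q : Fin (k + 1) => _), ← Finset.sum_neg_distrib]
  simp only [Fin.castSucc_zero, Fin.le_zero_iff, Fin.succ_ne_zero, if_false, zero_add,
    ← Fin.succ_castSucc, Fin.succ_le_succ_iff, Fin.cons_comp_succ_succAbove, ← Fin.cons_update,
    Fin.val_succ, pow_succ (-1 : ℤ) ((p : ℕ) + 1), mul_neg_one, neg_smul, neg_ite, neg_zero]
  rfl

variable [Module R V] (l r : g →ₗ[R] Module.End R V)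

def leftTerm {k : ℕ} (c : (Fin k → g) → V) (x : Fin (k + 1) → g) : V :=
  ∑ p : Fin k, ((-1 : ℤ) ^ (p : ℕ)) • l (x p.castSucc) (c (x ∘ p.castSucc.succAbove))

def rightTerm {k : ℕ} (c : (Fin k → g) → V) (x : Fin (k + 1) → g) : V :=
  ((-1 : ℤ) ^ (k + 1)) • r (x (Fin.last k)) (c (x ∘ Fin.castSucc))

theorem leftTerm_cons {k : ℕ} (c : (Fin (k + 1) → g) → V) (a : g) (y : Fin (k + 1) → g) :
    leftTerm l c (Fin.cons a y) = l a (c y) - leftTerm l (fun t => c (Fin.cons a t)) y := by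
  simp only [leftTerm, Fin.sum_univ_succ, Fin.castSucc_zero, Fin.cons_zero, Fin.succAbove_zero,
    Fin.cons_comp_succ, Fin.val_zero, pow_zero, one_smul, sub_eq_add_neg,
    ← Finset.sum_neg_distrib, ← Fin.succ_castSucc, Fin.cons_comp_succ_succAbove, Fin.cons_succ,
    Fin.val_succ, pow_succ, mul_neg_one, neg_smul]
  rfl

theorem rightTerm_cons {k : ℕ} (c : (Fin (k + 1) → g) → V) (a : g) (y : Fin (k + 1) → g) :
    rightTerm r c (Fin.cons a y) = -rightTerm r (fun t => c (Fin.cons a t)) y := by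
  simp only [rightTerm, ← Fin.succ_last, Fin.cons_succ, Fin.cons_comp_castSucc,
    pow_succ (-1 : ℤ) (k + 1), mul_neg_one, neg_smul]

theorem map_bracket_add_bracket_swap (hl : ∀ x y : g, l (b x y) = l x * l y - l y * l x)
    (x a : g) : l (b x a + b a x) = 0 := by
  rw [map_add, hl, hl]
  abel

def lieDeriv (a : g) {k : ℕ} (c : (Fin k → g) → V) : (Fin k → g) → V :=
  fun y => l a (c y) - ∑ j, c (Function.update y j (b a (y j)))

theorem lieDeriv_sub (a : g) {k : ℕ} (c c' : (Fin k → g) → V) :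
    lieDeriv b l a (fun y => c y - c' y) = lieDeriv b l a c - lieDeriv b l a c' := by
  funext y
  simp only [lieDeriv, Pi.sub_apply, map_sub, Finset.sum_sub_distrib]
  abel

theorem lieDeriv_cons (a w : g) {k : ℕ} (c : (Fin (k + 1) → g) → V) (y : Fin k → g) :
    lieDeriv b l a c (Fin.cons w y)
      = lieDeriv b l a (fun t => c (Fin.cons w t)) y - c (Fin.cons (b a w) y) := by
  simp only [lieDeriv, Fin.sum_univ_succ, Fin.cons_zero, Fin.update_cons_zero, Fin.cons_succ,
    ← Fin.cons_update]
  abel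

theorem lieDeriv_add_left {k : ℕ} (c : MultilinearMap R (fun _ : Fin k => g) V) (u v : g) :
    lieDeriv b l (u + v) c = lieDeriv b l u c + lieDeriv b l v c := by
  funext y
  simp only [lieDeriv, map_add, LinearMap.add_apply, c.map_update_add, Finset.sum_add_distrib,
    Pi.add_apply]
  abel

theorem lieDeriv_eq_zero {k : ℕ} (c : MultilinearMap R (fun _ : Fin k => g) V) {w : g}
    (hlw : l w = 0) (hbw : ∀ z, b w z = 0) : lieDeriv b l w c = 0 := by
  funext y
  simp [lieDeriv, hlw, hbw]

theorem lieDeriv_bracket_swap (leib : ∀ x y z : g, b x (b y z) = b (b x y) z + b y (b x z))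
    (hl : ∀ x y : g, l (b x y) = l x * l y - l y * l x)
    {k : ℕ} (c : MultilinearMap R (fun _ : Fin k => g) V) (x a : g) :
    lieDeriv b l (b x a) c = -lieDeriv b l (b a x) c := by
  rw [eq_neg_iff_add_eq_zero, ← lieDeriv_add_left]
  exact lieDeriv_eq_zero b l c (map_bracket_add_bracket_swap b l hl x a)
    (bracket_add_bracket_swap_apply b leib x a)

theorem lieDeriv_commutator (leib : ∀ x y z : g, b x (b y z) = b (b x y) z + b y (b x z))
    (hl : ∀ x y : g, l (b x y) = l x * l y - l y * l x)
    {k : ℕ} (c : MultilinearMap R (fun _ : Fin k => g) V) (x a : g) :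
    lieDeriv b l x (lieDeriv b l a c) - lieDeriv b l a (lieDeriv b l x c)
      = lieDeriv b l (b x a) c := by
  induction k with
  | zero =>
    funext y
    simp [lieDeriv, hl, Module.End.mul_apply]
  | succ n ih =>
    funext y
    induction y using Fin.consCases with
    | cons w t =>
    have hc : c (Fin.cons (b x (b a w)) t)
        = c (Fin.cons (b (b x a) w) t) + c (Fin.cons (b a (b x w)) t) := by
      rw [leib x a w]
      exact c.cons_add t _ _
    have ih_w : lieDeriv b l x (lieDeriv b l a fun t => c (Fin.cons w t)) t
        - lieDeriv b l a (lieDeriv b l x fun t => c (Fin.cons w t)) t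
        = lieDeriv b l (b x a) (fun t => c (Fin.cons w t)) t :=
      congrFun (ih (c.curryLeft w)) t
    simp only [lieDeriv_cons, lieDeriv_sub, Pi.sub_apply, hc, ← ih_w]
    abel

end CommRing

section Field

variable {K g V : Type*} [Field K] [AddCommGroup g] [Module K g] [AddCommGroup V] [Module K V]
  (b : g →ₗ[K] g →ₗ[K] g) (l r : g →ₗ[K] Module.End K V)

theorem leibnizCoboundary_eq {k : ℕ} (c : (Fin k → g) → V) (x : Fin (k + 1) → g) :
    leibnizCoboundary b l r c x = leftTerm l c x + rightTerm r c x + bracketTerm b c x := by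
  unfold leibnizCoboundary
  congr 1
  refine Finset.sum_congr rfl fun p _ => ?_
  rw [Fin.sum_univ_succ]
  simp only [Fin.not_lt_zero, dite_false, zero_add, Fin.pred_succ, ← Fin.le_castSucc_iff,
    dite_eq_ite]

theorem leibnizCoboundary_cons {k : ℕ} (c : (Fin (k + 1) → g) → V) (a : g)
    (y : Fin (k + 1) → g) :
    leibnizCoboundary b l r c (Fin.cons a y)
      = lieDeriv b l a c y - leibnizCoboundary b l r (fun t => c (Fin.cons a t)) y := by
  rw [leibnizCoboundary_eq, leibnizCoboundary_eq, leftTerm_cons, rightTerm_cons, bracketTerm_cons,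
    lieDeriv]
  abel

theorem leibnizCoboundary_sub {k : ℕ} (c c' : (Fin k → g) → V) :
    leibnizCoboundary b l r (fun x => c x - c' x)
      = leibnizCoboundary b l r c - leibnizCoboundary b l r c' := by
  funext x
  simp only [leibnizCoboundary_eq, leftTerm, rightTerm, bracketTerm, Pi.sub_apply, map_sub,
    smul_sub, ← Finset.sum_filter, Finset.sum_sub_distrib]
  abel

theorem leibnizCoboundary_fin_zero (c : (Fin 0 → g) → V) (x : Fin 1 → g) :
    leibnizCoboundary b l r c x = -r (x 0) (c ![]) := by
  simp [leibnizCoboundary, Subsingleton.elim (x ∘ Fin.castSucc) ![]]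

theorem leibnizCoboundary_fin_one (c : (Fin 1 → g) → V) (x : Fin 2 → g) :
    leibnizCoboundary b l r c x = l (x 0) (c ![x 1]) + r (x 1) (c ![x 0]) - c ![b (x 0) (x 1)] := by
  have h_succ : x ∘ Fin.succ = ![x 1] := funext fun i => by fin_cases i; rfl
  have h_castSucc : x ∘ Fin.castSucc = ![x 0] := funext fun i => by fin_cases i; rfl
  have h_update (y : Fin 1 → g) (v : g) : Function.update y 0 v = ![v] :=
    funext fun i => by fin_cases i; simp
  simp [leibnizCoboundary_eq, leftTerm, rightTerm, bracketTerm, h_succ, h_castSucc, h_update,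
    sub_eq_add_neg]

theorem leibnizCoboundary_lieDeriv_fin_zero
    (hr : ∀ x y : g, r (b x y) = l x * r y - r y * l x) (c : (Fin 0 → g) → V) (a : g)
    (x : Fin 1 → g) :
    leibnizCoboundary b l r (lieDeriv b l a c) x =
      lieDeriv b l a (leibnizCoboundary b l r c) x := by
  simp only [lieDeriv, leibnizCoboundary_fin_zero, Fin.sum_univ_zero, Fin.sum_univ_succ,
    Function.update_self, hr, LinearMap.sub_apply, Module.End.mul_apply, map_neg, sub_zero,
    add_zero]
  abel

theorem leibnizCoboundary_lieDeriv
    (leib : ∀ x y z : g, b x (b y z) = b (b x y) z + b y (b x z))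
    (hl : ∀ x y : g, l (b x y) = l x * l y - l y * l x)
    (hr : ∀ x y : g, r (b x y) = l x * r y - r y * l x)
    {k : ℕ} (c : MultilinearMap K (fun _ : Fin k => g) V) (a : g) :
    leibnizCoboundary b l r (lieDeriv b l a c) = lieDeriv b l a (leibnizCoboundary b l r c) := by
  induction k with
  | zero => exact funext (leibnizCoboundary_lieDeriv_fin_zero b l r hr c a)
  | succ n ih =>
    funext y
    induction y using Fin.consCases with
    | cons w t =>
    have ih_w : leibnizCoboundary b l r (lieDeriv b l a fun s => c (Fin.cons w s)) t
        = lieDeriv b l a (leibnizCoboundary b l r fun s => c (Fin.cons w s)) t :=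
      congrFun (ih (c.curryLeft w)) t
    have comm : lieDeriv b l w (lieDeriv b l a c) t
        = -lieDeriv b l (b a w) c t + lieDeriv b l a (lieDeriv b l w c) t := by
      rw [← sub_eq_iff_eq_add, ← Pi.sub_apply, lieDeriv_commutator b l leib hl,
        lieDeriv_bracket_swap b l leib hl, Pi.neg_apply]
    simp only [leibnizCoboundary_cons, lieDeriv_cons, leibnizCoboundary_sub, lieDeriv_sub,
      Pi.sub_apply, ih_w, comm]
    abel

theorem leibnizCoboundary_leibnizCoboundary_fin_zero
    (hr : ∀ x y : g, r (b x y) = l x * r y - r y * l x)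
    (hrl : ∀ x y : g, r y * l x = -(r y * r x)) (c : (Fin 0 → g) → V) (x : Fin 2 → g) :
    leibnizCoboundary b l r (leibnizCoboundary b l r c) x = 0 := by
  have h := congrArg (· (c ![])) (hrl (x 0) (x 1))
  simp only [Module.End.mul_apply, LinearMap.neg_apply] at h
  simp only [leibnizCoboundary_fin_one, leibnizCoboundary_fin_zero, Matrix.cons_val_fin_one,
    map_neg, hr, LinearMap.sub_apply, Module.End.mul_apply, h]
  abel

end Field

end LeibnizCochain

/-- for a representation `(V,l,r)` of a Leibniz algebra `g`, the Leibniz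
coboundary operator on multilinear cochains `C^k(g,V)` squares to zero: `∂(∂c) = 0`. -/
theorem leibnizCoboundary_squared
    {K : Type*} [Field K] {g V : Type*} [AddCommGroup g] [Module K g]
    [AddCommGroup V] [Module K V]
    (b : g →ₗ[K] g →ₗ[K] g)
    (leib : ∀ x y z : g, b x (b y z) = b (b x y) z + b y (b x z))
    (l r : g →ₗ[K] Module.End K V)
    (hl : ∀ x y : g, l (b x y) = l x * l y - l y * l x)
    (hr : ∀ x y : g, r (b x y) = l x * r y - r y * l x)
    (hrl : ∀ x y : g, r y * l x = -(r y * r x))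
    {k : ℕ} (c : MultilinearMap K (fun _ : Fin k => g) V) :
    ∀ x : Fin (k + 2) → g,
      leibnizCoboundary b l r (leibnizCoboundary b l r (⇑c)) x = 0 := by
  open LeibnizCochain in
  induction k with
  | zero => exact leibnizCoboundary_leibnizCoboundary_fin_zero b l r hr hrl c
  | succ n ih =>
    intro x
    induction x using Fin.consCases with
    | cons w t =>
    have ih_w : leibnizCoboundary b l r (leibnizCoboundary b l r fun s => c (Fin.cons w s)) t = 0 :=
      ih (c.curryLeft w) t
    simp only [leibnizCoboundary_cons, leibnizCoboundary_sub, Pi.sub_apply,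
      leibnizCoboundary_lieDeriv b l r leib hl hr, ih_w]
    abel
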